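/- arXiv:1401.6560 — 3 statements merged into one kernel-verified Lean document; each statement's English description precedes it below -/
import Mathlib

section
/- Fix natural numbers $p \ge 1$, $m \ge 1$, and for $i \ge 1$ let $\|B_i\| = \frac{\sqrt{(im)!\,((i+1)m)!}}{(im-p)!}$ (assuming $im \ge p$). Then there exists $N$ such that for all $i \ge N$, $\|B_{i-1}\| \cdot \|B_{i+1}\| \le \|B_i\|^2$. -/
/-! With `a = i * m` and `b = a - p`, the square `‖B_i‖² = a! (a+m)! / b!²` equals
`((b+1) ⋯ (b+p))² · (a+1) ⋯ (a+m)`, a product of linear factors in `b`. Each linear factor is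
log-concave along steps of `m`, since `x (x + 2m) ≤ (x + m)²`, so `‖B_i‖²` is log-concave in `i`
as soon as `i m ≥ p`. -/

open Nat

namespace Nat

theorem ascFactorial_mul_ascFactorial_add_two_mul_le_sq (x m k : ℕ) :
    x.ascFactorial k * (x + 2 * m).ascFactorial k ≤ (x + m).ascFactorial k ^ 2 := by
  induction k with
  | zero => simp
  | succ k ih =>
    have amgm : (x + k) * (x + 2 * m + k) ≤ (x + m + k) ^ 2 := by nlinarith
    simp only [ascFactorial_succ]
    calc (x + k) * x.ascFactorial k * ((x + 2 * m + k) * (x + 2 * m).ascFactorial k)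
        = (x + k) * (x + 2 * m + k) * (x.ascFactorial k * (x + 2 * m).ascFactorial k) := by
          ring
      _ ≤ (x + m + k) ^ 2 * (x + m).ascFactorial k ^ 2 := Nat.mul_le_mul amgm ih
      _ = ((x + m + k) * (x + m).ascFactorial k) ^ 2 := by ring

end Nat

/-- `‖B_i‖²` as a function of `b = i * m - p`. -/
def blockNormSq (p m b : ℕ) : ℕ :=
  (b + 1).ascFactorial p ^ 2 * (b + p + 1).ascFactorial m

theorem blockNormSq_mul_blockNormSq_add_two_mul_le_sq (p m b : ℕ) :
    blockNormSq p m b * blockNormSq p m (b + 2 * m) ≤ blockNormSq p m (b + m) ^ 2 := by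
  have hP := Nat.ascFactorial_mul_ascFactorial_add_two_mul_le_sq (b + 1) m p
  have hR := Nat.ascFactorial_mul_ascFactorial_add_two_mul_le_sq (b + p + 1) m m
  have hb₁ : b + m + 1 = b + 1 + m := by ring
  have hb₂ : b + 2 * m + 1 = b + 1 + 2 * m := by ring
  have ha₁ : b + m + p + 1 = b + p + 1 + m := by ring
  have ha₂ : b + 2 * m + p + 1 = b + p + 1 + 2 * m := by ring
  unfold blockNormSq
  rw [hb₁, hb₂, ha₁, ha₂]
  calc (b + 1).ascFactorial p ^ 2 * (b + p + 1).ascFactorial m *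
        ((b + 1 + 2 * m).ascFactorial p ^ 2 * (b + p + 1 + 2 * m).ascFactorial m)
      = ((b + 1).ascFactorial p * (b + 1 + 2 * m).ascFactorial p) ^ 2 *
          ((b + p + 1).ascFactorial m * (b + p + 1 + 2 * m).ascFactorial m) := by ring
    _ ≤ ((b + 1 + m).ascFactorial p ^ 2) ^ 2 * (b + p + 1 + m).ascFactorial m ^ 2 :=
        Nat.mul_le_mul (Nat.pow_le_pow_left hP 2) hR
    _ = ((b + 1 + m).ascFactorial p ^ 2 * (b + p + 1 + m).ascFactorial m) ^ 2 := by ring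

theorem sq_sqrt_factorial_mul_factorial_div_factorial (p m b : ℕ) :
    (√(((b + p)! : ℝ) * ((b + p + m)! : ℝ)) / (b ! : ℝ)) ^ 2 = blockNormSq p m b := by
  have hp : ((b + p)! : ℝ) = b ! * (b + 1).ascFactorial p := by
    exact_mod_cast (factorial_mul_ascFactorial b p).symm
  have hm : ((b + p + m)! : ℝ) = (b + p)! * (b + p + 1).ascFactorial m := by
    exact_mod_cast (factorial_mul_ascFactorial (b + p) m).symm
  have hb : (b ! : ℝ) ≠ 0 := by positivity
  rw [div_pow, Real.sq_sqrt (by positivity), hm, hp, blockNormSq]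
  push_cast
  field_simp

theorem stmt_4 (p m : ℕ) (hp : 1 ≤ p) (hm : 1 ≤ m)
    (B : ℕ → ℝ)
    (hB : ∀ i, 1 ≤ i → p ≤ i * m →
      B i = Real.sqrt ((Nat.factorial (i * m) : ℝ) * (Nat.factorial ((i + 1) * m) : ℝ)) /
        (Nat.factorial (i * m - p) : ℝ)) :
    ∃ N : ℕ, ∀ i, N ≤ i → B (i - 1) * B (i + 1) ≤ (B i) ^ 2 := by
  refine ⟨p + 1, fun i hi => ?_⟩
  obtain ⟨j, rfl⟩ : ∃ j, i = j + 1 := ⟨i - 1, by omega⟩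
  obtain ⟨b, hb⟩ : ∃ b, j * m = b + p :=
    Nat.exists_eq_add_of_le' (le_trans (by omega) (Nat.le_mul_of_pos_right j hm))
  have hBk : ∀ k, B (j + k) =
      √(((b + k * m + p)! : ℝ) * ((b + k * m + p + m)! : ℝ)) / ((b + k * m)! : ℝ) := by
    intro k
    have hjk : (j + k) * m = b + k * m + p := by rw [add_mul, hb]; ring
    rw [hB (j + k) (by omega) (by omega), hjk, Nat.add_sub_cancel,
      show (j + k + 1) * m = b + k * m + p + m by rw [add_mul, hjk, one_mul]]
  have hB0 := hBk 0
  have hB1 := hBk 1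
  have hB2 := hBk 2
  simp only [add_zero, zero_mul, one_mul] at hB0 hB1
  rw [show j + 1 - 1 = j by omega, show j + 1 + 1 = j + 2 by omega, hB0, hB1, hB2]
  refine (pow_le_pow_iff_left₀ (by positivity) (by positivity) two_ne_zero).mp ?_
  rw [mul_pow, sq_sqrt_factorial_mul_factorial_div_factorial,
    sq_sqrt_factorial_mul_factorial_div_factorial, sq_sqrt_factorial_mul_factorial_div_factorial]
  exact_mod_cast blockNormSq_mul_blockNormSq_add_two_mul_le_sq p m b
end

section
/- Let $(b_i)_{i\ge 1}$ be positive reals with $b_{i+1}/b_i$ nonincreasing in $i$ (i.e. $b_i b_{i+2} \le b_{i+1}^2$ for all $i$) and $\sum_i 1/b_i < \infty$. Then $\sum_{j=1}^{\infty} \left(\prod_{k=1}^{j} \frac{b_{2k-1}}{b_{2k}}\right)^2 < \infty$. -/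
open Finset

/-
Log-concavity `b i * b (i + 2) ≤ b (i + 1) ^ 2` makes the partial products telescope into a bound:
`(∏_{k ≤ j} b (2k-1) / b (2k))² ≤ b 1 / b (2j+1)`, since each new factor `(b m / b (m+1))²`
turns `b 1 / b m` into at most `b 1 / b (m+2)`. The right-hand side is summable because `1 / b i` is.
-/

lemma sq_div_mul_div_le_div {x y z c : ℝ} (hx : 0 < x) (hy : 0 < y) (hz : 0 < z) (hc : 0 ≤ c)
    (hxyz : x * z ≤ y ^ 2) : (x / y) ^ 2 * (c / x) ≤ c / z := by
  rw [div_pow, div_mul_div_comm, div_le_div_iff₀ (by positivity) hz]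
  calc x ^ 2 * c * z = x * c * (x * z) := by ring
    _ ≤ x * c * y ^ 2 := by gcongr
    _ = c * (y ^ 2 * x) := by ring

lemma sq_prod_div_le_of_logConcave {b : ℕ → ℝ} (hb : ∀ i, 0 < b i)
    (hlc : ∀ i, 1 ≤ i → b i * b (i + 2) ≤ b (i + 1) ^ 2) (j : ℕ) :
    (∏ k ∈ Icc 1 j, b (2 * k - 1) / b (2 * k)) ^ 2 ≤ b 1 / b (2 * j + 1) := by
  induction j with
  | zero => simp [div_self (hb 1).ne']
  | succ n ih =>
    rw [prod_Icc_succ_top (by omega), mul_pow, mul_comm, show 2 * (n + 1) - 1 = 2 * n + 1 by omega,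
      show 2 * (n + 1) = 2 * n + 1 + 1 by omega, show 2 * n + 1 + 1 + 1 = 2 * n + 1 + 2 by omega]
    exact (mul_le_mul_of_nonneg_left ih (sq_nonneg _)).trans
      (sq_div_mul_div_le_div (hb _) (hb _) (hb _) (hb 1).le (hlc _ (by omega)))

lemma Summable.comp_two_mul_add_one {f : ℕ → ℝ} (hf : Summable f) :
    Summable fun j => f (2 * j + 1) :=
  hf.comp_injective fun _ _ h => by omega

theorem stmt_8 (b : ℕ → ℝ) (hb : ∀ i, 0 < b i)
    (hlc : ∀ i, 1 ≤ i → b i * b (i + 2) ≤ (b (i + 1)) ^ 2)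
    (hsum : Summable fun i : ℕ => 1 / b i) :
    Summable fun j : ℕ => (∏ k ∈ Finset.Icc 1 j, b (2 * k - 1) / b (2 * k)) ^ 2 := by
  have hbound : Summable fun j => b 1 / b (2 * j + 1) := by
    simpa only [mul_one_div] using hsum.comp_two_mul_add_one.mul_left (b 1)
  exact hbound.of_nonneg_of_le (fun _ => sq_nonneg _) (sq_prod_div_le_of_logConcave hb hlc)
end

section
/- Fix natural numbers $p \ge 1$, $m \ge 1$ and define $\omega_k = \frac{\sqrt{k!\,(k+m)!}}{(k-p)!}$ for $k \ge p$. Then for every complex number $\lambda$, the sequence $a_k = \prod_{j=p}^{k-1} \frac{\lambda}{\omega_j}$ (with $a_p = 1$) satisfies $\sum_{k=p}^{\infty} |a_k|^2 < \infty$. -/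
/-! The weights grow at least linearly, `k ≤ ω k`, so the factors `λ / ω j` tend to `0` and the
squared products decay faster than any geometric sequence; the ratio test concludes. -/

open Finset Filter Topology
open scoped Nat

theorem summable_norm_prod_Ico_of_tendsto_zero {R : Type*} [SeminormedCommRing R]
    {f : ℕ → R} (hf : Tendsto f atTop (𝓝 0)) (p : ℕ) :
    Summable fun k : ℕ => ‖∏ j ∈ Ico p k, f j‖ := by
  have hsmall : ∀ᶠ n in atTop, ‖f n‖ ≤ 1 / 2 :=
    (tendsto_norm_zero.comp hf).eventually (ge_mem_nhds (by norm_num))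
  refine summable_of_ratio_norm_eventually_le (r := 1 / 2) (by norm_num) ?_
  filter_upwards [hsmall, eventually_ge_atTop p] with n hn hpn
  rw [prod_Ico_succ_top hpn, norm_norm, norm_norm]
  calc ‖(∏ j ∈ Ico p n, f j) * f n‖ ≤ ‖∏ j ∈ Ico p n, f j‖ * ‖f n‖ := norm_mul_le _ _
    _ ≤ ‖∏ j ∈ Ico p n, f j‖ * (1 / 2) := by gcongr
    _ = 1 / 2 * ‖∏ j ∈ Ico p n, f j‖ := mul_comm _ _

theorem summable_norm_prod_Ico_sq_of_tendsto_zero {𝕜 : Type*} [NormedField 𝕜]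
    {f : ℕ → 𝕜} (hf : Tendsto f atTop (𝓝 0)) (p : ℕ) :
    Summable fun k : ℕ => ‖∏ j ∈ Ico p k, f j‖ ^ 2 := by
  have hf2 : Tendsto (fun j => f j ^ 2) atTop (𝓝 0) := by simpa using hf.pow 2
  simpa only [prod_pow, norm_pow] using summable_norm_prod_Ico_of_tendsto_zero hf2 p

theorem Nat.mul_factorial_sub_le_factorial {k p : ℕ} (hp : 1 ≤ p) :
    k * (k - p)! ≤ k ! := by
  rcases Nat.eq_zero_or_pos k with rfl | hk
  · simp
  calc k * (k - p)! ≤ k * (k - 1)! := Nat.mul_le_mul_left k (Nat.factorial_le (by omega))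
    _ = k ! := Nat.mul_factorial_pred hk.ne'

theorem natCast_le_sqrt_factorial_mul_div {p k : ℕ} (m : ℕ) (hp : 1 ≤ p) :
    (k : ℝ) ≤ √((k ! : ℝ) * ((k + m)! : ℝ)) / ((k - p)! : ℝ) := by
  have hk : (k ! : ℝ) ≤ √((k ! : ℝ) * ((k + m)! : ℝ)) := by
    refine Real.le_sqrt_of_sq_le ?_
    rw [sq]
    gcongr
    exact Nat.le_add_right k m
  rw [le_div_iff₀ (by positivity)]
  calc (k : ℝ) * ((k - p)! : ℝ) ≤ (k ! : ℝ) := by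
        exact_mod_cast Nat.mul_factorial_sub_le_factorial hp
    _ ≤ _ := hk

theorem stmt_10_general (p m : ℕ) (hp : 1 ≤ p) (lam : ℂ)
    (ω : ℕ → ℝ)
    (hω : ∀ k, p ≤ k →
      ω k = Real.sqrt ((Nat.factorial k : ℝ) * (Nat.factorial (k + m) : ℝ)) /
        (Nat.factorial (k - p) : ℝ)) :
    Summable fun k : ℕ =>
      ‖∏ j ∈ Finset.Ico p k, (lam / (ω j : ℂ))‖ ^ 2 := by
  have hω_atTop : Tendsto ω atTop atTop := by
    refine tendsto_atTop_mono' atTop ?_ tendsto_natCast_atTop_atTop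
    filter_upwards [eventually_ge_atTop p] with k hk
    rw [hω k hk]
    exact natCast_le_sqrt_factorial_mul_div m hp
  have hinv : Tendsto (fun k => (ω k : ℂ)⁻¹) atTop (𝓝 0) := by
    simpa [Function.comp_def] using
      (Complex.continuous_ofReal.tendsto 0).comp (tendsto_inv_atTop_zero.comp hω_atTop)
  have hfactor : Tendsto (fun k => lam / (ω k : ℂ)) atTop (𝓝 0) := by
    simpa only [div_eq_mul_inv, mul_zero] using hinv.const_mul lam
  exact summable_norm_prod_Ico_sq_of_tendsto_zero hfactor p

theorem stmt_10 (p m : ℕ) (hp : 1 ≤ p) (hm : 1 ≤ m) (lam : ℂ)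
    (ω : ℕ → ℝ)
    (hω : ∀ k, p ≤ k →
      ω k = Real.sqrt ((Nat.factorial k : ℝ) * (Nat.factorial (k + m) : ℝ)) /
        (Nat.factorial (k - p) : ℝ)) :
    Summable fun k : ℕ =>
      ‖∏ j ∈ Finset.Ico p k, (lam / (ω j : ℂ))‖ ^ 2 :=
  stmt_10_general p m hp lam ω hω
end
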